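/- Let A be an anti-commutative algebra over a field F. Then A is a CB-algebra if and only if every element of A is an absolute zero divisor, i.e., (y·x)·x = 0 for all x, y ∈ A. -/

import Mathlib

/-!
For an alternating product, `x · x = 0` together with the CB-property gives `(x · y) · x = 0`,
and antisymmetry turns this into `(y · x) · x = 0`. Conversely, polarizing `(y · x) · x = 0`
in `x` gives `(y · x) · z + (y · z) · x = 0`; when `x · y = 0` this yields `(x · z) · y = 0`.
-/

namespace LinearMap

section AddCommMonoid

variable {R M : Type*} [CommSemiring R] [AddCommMonoid M] [Module R M] {mul : M →ₗ[R] M →ₗ[R] M}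

theorem mul_mul_add_mul_mul_eq_zero_of_forall_mul_mul_self_eq_zero
    (h : ∀ x y : M, mul (mul y x) x = 0) (x y z : M) :
    mul (mul y x) z + mul (mul y z) x = 0 := by
  have hpolar := h (x + z) y
  simp only [map_add, add_apply, h x y, h z y, zero_add, add_zero] at hpolar
  rwa [add_comm] at hpolar

theorem mul_mul_eq_zero_of_forall_mul_mul_self_eq_zero
    (h : ∀ x y : M, mul (mul y x) x = 0) {x y : M} (hxy : mul x y = 0) (z : M) :
    mul (mul x z) y = 0 := by
  simpa [hxy] using mul_mul_add_mul_mul_eq_zero_of_forall_mul_mul_self_eq_zero h z x y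

end AddCommMonoid

section AddCommGroup

variable {R M : Type*} [CommSemiring R] [AddCommGroup M] [Module R M] {mul : M →ₗ[R] M →ₗ[R] M}

theorem IsAlt.mul_mul_self_eq_zero (hac : mul.IsAlt)
    (hCB : ∀ x y : M, mul x y = 0 → ∀ z : M, mul (mul x z) y = 0) (x y : M) :
    mul (mul y x) x = 0 := by
  rw [← hac.neg x y, map_neg, neg_apply, hCB x x (hac x) y, neg_zero]

end AddCommGroup

end LinearMap

theorem stmt_1 (F : Type*) [Field F] (A : Type*) [AddCommGroup A] [Module F A]
    (mul : A →ₗ[F] A →ₗ[F] A)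
    (hac : ∀ x : A, mul x x = 0) :
    (∀ x y : A, mul x y = 0 → ∀ z : A, mul (mul x z) y = 0) ↔
      (∀ x y : A, mul (mul y x) x = 0) :=
  ⟨LinearMap.IsAlt.mul_mul_self_eq_zero hac,
    fun h _ _ hxy ↦ LinearMap.mul_mul_eq_zero_of_forall_mul_mul_self_eq_zero h hxy⟩
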